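/- arXiv:0710.3957 — 4 statements merged into one kernel-verified Lean document; each statement's English description precedes it below -/
import Mathlib

section
/- Let ℓ > 0, let g : ℝ → ℝ be ℓ-periodic and Lebesgue integrable on [0,ℓ], and let F : ℝ → ℝ be an ℓ-periodic function satisfying F(b) − F(a) = ∫_a^b g(t) dt for all real a ≤ b. Then for any points p₁, …, p_N ∈ ℝ (N ≥ 1), with G(x) = −(1/N) ∑_{n=1}^N Ψ_ℓ(p_n − x), one has (1/N) ∑_{n=1}^N F(p_n) − (1/ℓ) ∫_0^ℓ F(x) dx = ∫_0^ℓ g(x) G(x) dx. -/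
/-!
Both sides are averages over the points, so it suffices to treat a single point `q`. The
integrand `x ↦ g x * Ψ_ℓ(q - x)` is `ℓ`-periodic, so its integral over `[0, ℓ]` equals the one
over `[q, q + ℓ]`, where `Ψ_ℓ(q - x) = 1/2 - (x - q)/ℓ` is affine. Since `∫_q^{q+ℓ} g = 0` by
periodicity of `F`, what remains is `-(1/ℓ) ∫_q^{q+ℓ} (x - q) g(x) dx`, which integration by parts
for the absolutely continuous primitive `F` turns into `(1/ℓ) ∫_q^{q+ℓ} F - F(q)`.
-/

/-- The `ℓ`-periodic first Bernoulli function `Ψ_ℓ(x) = {x/ℓ} - 1/2`. -/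
noncomputable def psiPer (ℓ x : ℝ) : ℝ := Int.fract (x / ℓ) - 1 / 2

open MeasureTheory Set

lemma psiPer_periodic {ℓ : ℝ} (hℓ : ℓ ≠ 0) : Function.Periodic (psiPer ℓ) ℓ := by
  intro x
  simp only [psiPer, add_div, div_self hℓ, Int.fract_add_one]

lemma abs_psiPer_le (ℓ x : ℝ) : |psiPer ℓ x| ≤ 1 / 2 := by
  rw [psiPer, abs_le]
  constructor <;> linarith [Int.fract_nonneg (x / ℓ), Int.fract_lt_one (x / ℓ)]

lemma measurable_psiPer (ℓ : ℝ) : Measurable (psiPer ℓ) :=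
  (measurable_fract.comp (measurable_id.div_const ℓ)).sub_const _

lemma psiPer_sub_of_mem_Ioo {ℓ q x : ℝ} (hℓ : 0 < ℓ) (hx : x ∈ Ioo q (q + ℓ)) :
    psiPer ℓ (q - x) = 1 / 2 - (x - q) / ℓ := by
  have hfract : Int.fract ((q - x) / ℓ) = (q - x) / ℓ + 1 := by
    have hneg : (q - x) / ℓ < 0 := div_neg_of_neg_of_pos (by linarith [hx.1]) hℓ
    have hgt : -1 < (q - x) / ℓ := by
      rw [lt_div_iff₀ hℓ]
      linarith [hx.2]
    rw [Int.fract_eq_iff]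
    exact ⟨by linarith, by linarith, -1, by push_cast; ring⟩
  rw [psiPer, hfract]
  ring

lemma IntervalIntegrable.mul_psiPer_sub {g : ℝ → ℝ} {a b : ℝ}
    (hg : IntervalIntegrable g volume a b) (ℓ q : ℝ) :
    IntervalIntegrable (fun x => g x * psiPer ℓ (q - x)) volume a b := by
  rw [intervalIntegrable_iff] at hg ⊢
  refine hg.mul_bdd (c := 1 / 2) ?_ (ae_of_all _ fun x => abs_psiPer_le ℓ (q - x))
  exact ((measurable_psiPer ℓ).comp (measurable_const.sub measurable_id)).aestronglyMeasurable

lemma integral_sub_mul_eq_of_eq_add_integral {g F : ℝ → ℝ} {a b : ℝ}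
    (hg : IntervalIntegrable g volume a b)
    (hF : ∀ x ∈ uIcc a b, F x = F a + ∫ t in a..x, g t) :
    ∫ x in a..b, (x - a) * g x = (b - a) * F b - ∫ x in a..b, F x := by
  set v : ℝ → ℝ := fun x => ∫ t in a..x, g t
  have hv : AbsolutelyContinuousOnInterval v a b :=
    hg.absolutelyContinuousOnInterval_intervalIntegral left_mem_uIcc
  have hu : AbsolutelyContinuousOnInterval (fun x => x - a) a b :=
    ContDiffOn.absolutelyContinuousOnInterval (by fun_prop)
  have hderiv : ∫ x in a..b, (x - a) * deriv v x = ∫ x in a..b, (x - a) * g x := by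
    refine intervalIntegral.integral_congr_ae ?_
    filter_upwards [hg.ae_hasDerivAt_integral] with x hx hxI
    rw [(hx (uIoc_subset_uIcc hxI) a left_mem_uIcc).deriv]
  have hibp := hu.integral_mul_deriv_eq_deriv_mul hv
  have hF_int : ∫ x in a..b, F x = (b - a) * F a + ∫ x in a..b, v x := by
    rw [intervalIntegral.integral_congr hF,
      intervalIntegral.integral_add intervalIntegrable_const hv.continuousOn.intervalIntegrable,
      intervalIntegral.integral_const, smul_eq_mul]
  simp only [deriv_sub_const, deriv_id'', one_mul, sub_self, zero_mul, sub_zero] at hibp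
  rw [← hderiv, hibp, hF_int, hF b right_mem_uIcc]
  ring

lemma integral_mul_psiPer_sub {ℓ : ℝ} (hℓ : 0 < ℓ) {g F : ℝ → ℝ}
    (hg_per : Function.Periodic g ℓ) (hg_int : IntervalIntegrable g volume 0 ℓ)
    (hF_per : Function.Periodic F ℓ) (hFg : ∀ a b : ℝ, a ≤ b → F b - F a = ∫ t in a..b, g t)
    (q : ℝ) :
    ∫ x in (0:ℝ)..ℓ, g x * psiPer ℓ (q - x) = (1 / ℓ) * (∫ x in (0:ℝ)..ℓ, F x) - F q := by
  have hg_int' : IntervalIntegrable g volume q (q + ℓ) :=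
    hg_per.intervalIntegrable₀ hℓ.ne' hg_int _ _
  have hshift : ∫ x in (0:ℝ)..ℓ, g x * psiPer ℓ (q - x)
      = ∫ x in q..q + ℓ, g x * psiPer ℓ (q - x) := by
    simpa using (hg_per.mul ((psiPer_periodic hℓ.ne').const_sub q)).intervalIntegral_add_eq 0 q
  have haffine : ∫ x in q..q + ℓ, g x * psiPer ℓ (q - x)
      = 1 / 2 * (∫ x in q..q + ℓ, g x) - 1 / ℓ * ∫ x in q..q + ℓ, (x - q) * g x := by
    have hpointwise : EqOn (fun x => g x * psiPer ℓ (q - x))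
        (fun x => 1 / 2 * g x - 1 / ℓ * ((x - q) * g x)) (Ioo q (q + ℓ)) := fun x hx => by
      simp only [psiPer_sub_of_mem_Ioo hℓ hx]
      ring
    have hxg : IntervalIntegrable (fun x => (x - q) * g x) volume q (q + ℓ) :=
      hg_int'.continuousOn_mul (by fun_prop)
    rw [intervalIntegral.integral_congr_Ioo_of_le (by linarith) hpointwise,
      intervalIntegral.integral_sub (hg_int'.const_mul _) (hxg.const_mul _),
      intervalIntegral.integral_const_mul, intervalIntegral.integral_const_mul]
  have hg_zero : ∫ x in q..q + ℓ, g x = 0 := by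
    rw [← hFg q (q + ℓ) (by linarith), hF_per, sub_self]
  have hF_shift : ∫ x in (0:ℝ)..ℓ, F x = ∫ x in q..q + ℓ, F x := by
    simpa using hF_per.intervalIntegral_add_eq 0 q
  have hibp := integral_sub_mul_eq_of_eq_add_integral (F := F) hg_int' fun x hx => by
    rw [uIcc_of_le (by linarith)] at hx
    linarith [hFg q x hx.1]
  rw [hshift, haffine, hibp, hF_shift, hg_zero, add_sub_cancel_left, hF_per]
  field_simp
  ring

theorem stmt_0 (ℓ : ℝ) (hℓ : 0 < ℓ) (g F : ℝ → ℝ)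
    (hg_per : Function.Periodic g ℓ)
    (hg_int : IntervalIntegrable g MeasureTheory.volume 0 ℓ)
    (hF_per : Function.Periodic F ℓ)
    (hFg : ∀ a b : ℝ, a ≤ b → F b - F a = ∫ t in a..b, g t)
    (N : ℕ) (hN : 1 ≤ N) (p : Fin N → ℝ) :
    (1 / N : ℝ) * ∑ n, F (p n) - (1 / ℓ) * ∫ x in (0:ℝ)..ℓ, F x
      = ∫ x in (0:ℝ)..ℓ, g x * (-(1 / N : ℝ) * ∑ n, psiPer ℓ (p n - x)) := by
  have hN' : (N : ℝ) ≠ 0 := Nat.cast_ne_zero.mpr (by omega)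
  have hsum : ∫ x in (0:ℝ)..ℓ, g x * (-(1 / N : ℝ) * ∑ n, psiPer ℓ (p n - x))
      = -(1 / N : ℝ) * ∑ n, ∫ x in (0:ℝ)..ℓ, g x * psiPer ℓ (p n - x) := by
    rw [← intervalIntegral.integral_finsetSum fun n _ => hg_int.mul_psiPer_sub ℓ (p n),
      ← intervalIntegral.integral_const_mul]
    refine intervalIntegral.integral_congr fun x _ => ?_
    simp only [Finset.mul_sum]
    exact Finset.sum_congr rfl fun n _ => by ring
  rw [hsum, Finset.sum_congr rfl fun n _ =>
      integral_mul_psiPer_sub hℓ hg_per hg_int hF_per hFg (p n),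
    Finset.sum_sub_distrib, Finset.sum_const, Finset.card_univ, Fintype.card_fin, nsmul_eq_mul]
  field_simp
  ring
end

section
/- Let ℓ > 0 and let p₁, …, p_N ∈ ℝ (N ≥ 1). With G(x) = −(1/N) ∑_{n=1}^N Ψ_ℓ(p_n − x), one has ∫_0^ℓ G(x)² dx = (ℓ / (2N²)) ∑_{1 ≤ i, j ≤ N} Φ_ℓ(p_i − p_j). -/
/-- The `ℓ`-periodic second Bernoulli function `Φ_ℓ(x) = {x/ℓ}² - {x/ℓ} + 1/6`. -/
noncomputable def phiPer (ℓ x : ℝ) : ℝ :=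
  Int.fract (x / ℓ) ^ 2 - Int.fract (x / ℓ) + 1 / 6

/-!
Expanding the square, `∫₀^ℓ G²` is `1/N²` times the sum over pairs `(i, j)` of
`∫₀^ℓ Ψ_ℓ(p_i - x) Ψ_ℓ(p_j - x) dx`. Rescaling by `ℓ` and using `1`-periodicity, each such
integral is `ℓ` times the autocorrelation `∫₀¹ B(u + c) B(u) du` of `B(u) = {u} - 1/2` at
`c = (p_i - p_j)/ℓ`. Only `{c} = t ∈ [0, 1)` matters, and splitting `[0, 1]` at `1 - t`, where
`{u + t}` jumps, leaves two polynomial integrals summing to `(t² - t + 1/6)/2`.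
-/

open MeasureTheory Set intervalIntegral

lemma abs_fract_sub_half_le (x : ℝ) : |Int.fract x - 1 / 2| ≤ 1 / 2 :=
  abs_le.2 ⟨by linarith [Int.fract_nonneg x], by linarith [Int.fract_lt_one x]⟩

lemma intervalIntegrable_fract_sub_half_mul {f g : ℝ → ℝ} (hf : Measurable f)
    (hg : Measurable g) (a b : ℝ) :
    IntervalIntegrable (fun x ↦ (Int.fract (f x) - 1 / 2) * (Int.fract (g x) - 1 / 2))
      volume a b := by
  refine (intervalIntegrable_iff).2 <|
    Measure.integrableOn_of_bounded (M := 1 / 2 * (1 / 2)) measure_Ioc_lt_top.ne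
      ((((measurable_fract.comp hf).sub_const _).mul
        ((measurable_fract.comp hg).sub_const _)).aestronglyMeasurable) (ae_of_all _ fun x ↦ ?_)
  rw [Real.norm_eq_abs, abs_mul]
  exact mul_le_mul (abs_fract_sub_half_le _) (abs_fract_sub_half_le _) (abs_nonneg _)
    (by norm_num)

lemma integral_congr_Ioo {f g : ℝ → ℝ} {a b : ℝ} (hab : a ≤ b) (h : EqOn f g (Ioo a b)) :
    ∫ x in a..b, f x = ∫ x in a..b, g x := by
  rw [integral_of_le hab, integral_of_le hab, integral_Ioc_eq_integral_Ioo,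
    integral_Ioc_eq_integral_Ioo]
  exact setIntegral_congr_fun measurableSet_Ioo h

lemma integral_add_mul_add (a b p q : ℝ) :
    ∫ u in a..b, (u + p) * (u + q) =
      (b ^ 3 / 3 + (p + q) * b ^ 2 / 2 + p * q * b) -
        (a ^ 3 / 3 + (p + q) * a ^ 2 / 2 + p * q * a) := by
  refine integral_eq_sub_of_hasDerivAt
    (f := fun u ↦ u ^ 3 / 3 + (p + q) * u ^ 2 / 2 + p * q * u) (fun u _ ↦ ?_)
    ((by fun_prop : Continuous fun u : ℝ ↦ (u + p) * (u + q)).intervalIntegrable _ _)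
  convert (((hasDerivAt_pow 3 u).div_const 3).fun_add
    (((hasDerivAt_pow 2 u).const_mul (p + q)).div_const 2)).fun_add
    ((hasDerivAt_id' u).const_mul (p * q)) using 1
  norm_num
  ring

lemma integral_fract_add_sub_half_mul_of_mem_Ico {t : ℝ} (ht : t ∈ Ico 0 1) :
    ∫ u in (0 : ℝ)..1, (Int.fract (u + t) - 1 / 2) * (Int.fract u - 1 / 2) =
      (t ^ 2 - t + 1 / 6) / 2 := by
  obtain ⟨ht0, ht1⟩ := ht
  have hint : ∀ a b : ℝ, IntervalIntegrable
      (fun u ↦ (Int.fract (u + t) - 1 / 2) * (Int.fract u - 1 / 2)) volume a b :=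
    intervalIntegrable_fract_sub_half_mul (measurable_id.add_const t) measurable_id
  rw [← integral_add_adjacent_intervals (hint 0 (1 - t)) (hint (1 - t) 1)]
  have below : ∫ u in (0 : ℝ)..1 - t, (Int.fract (u + t) - 1 / 2) * (Int.fract u - 1 / 2) =
      ∫ u in (0 : ℝ)..1 - t, (u + (t - 1 / 2)) * (u + -(1 / 2)) := by
    refine integral_congr_Ioo (by linarith) fun u ⟨hu0, hu1⟩ ↦ ?_
    rw [Int.fract_eq_self.2 ⟨hu0.le, by linarith⟩, Int.fract_eq_self.2 ⟨by linarith, by linarith⟩]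
    ring
  have above : ∫ u in 1 - t..1, (Int.fract (u + t) - 1 / 2) * (Int.fract u - 1 / 2) =
      ∫ u in 1 - t..1, (u + (t - 3 / 2)) * (u + -(1 / 2)) := by
    refine integral_congr_Ioo (by linarith) fun u ⟨hu0, hu1⟩ ↦ ?_
    rw [← Int.fract_sub_one (u + t), Int.fract_eq_self.2 ⟨by linarith, by linarith⟩,
      Int.fract_eq_self.2 ⟨by linarith, hu1⟩]
    ring
  rw [below, above, integral_add_mul_add, integral_add_mul_add]
  ring

lemma integral_fract_add_sub_half_mul (c : ℝ) :
    ∫ u in (0 : ℝ)..1, (Int.fract (u + c) - 1 / 2) * (Int.fract u - 1 / 2) =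
      (Int.fract c ^ 2 - Int.fract c + 1 / 6) / 2 := by
  have hc : ∀ u : ℝ, Int.fract (u + c) = Int.fract (u + Int.fract c) := fun u ↦
    Int.fract_eq_fract.2 ⟨⌊c⌋, by rw [← Int.self_sub_fract]; ring⟩
  simp only [hc]
  exact integral_fract_add_sub_half_mul_of_mem_Ico ⟨Int.fract_nonneg c, Int.fract_lt_one c⟩

lemma integral_fract_sub_sub_half_mul (a b : ℝ) :
    ∫ x in (0 : ℝ)..1, (Int.fract (a - x) - 1 / 2) * (Int.fract (b - x) - 1 / 2) =
      (Int.fract (a - b) ^ 2 - Int.fract (a - b) + 1 / 6) / 2 := by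
  set g : ℝ → ℝ := fun u ↦ (Int.fract (u + (a - b)) - 1 / 2) * (Int.fract u - 1 / 2)
  have hg : Function.Periodic g 1 := fun u ↦ by
    simp only [g, add_right_comm u 1, Int.fract_add_one]
  calc ∫ x in (0 : ℝ)..1, (Int.fract (a - x) - 1 / 2) * (Int.fract (b - x) - 1 / 2)
      = ∫ x in (0 : ℝ)..1, g (b - x) := by simp only [g, sub_add_sub_cancel']
    _ = ∫ u in (b - 1)..(b - 1) + 1, g u := by rw [integral_comp_sub_left, sub_zero, sub_add_cancel]
    _ = ∫ u in (0 : ℝ)..0 + 1, g u := hg.intervalIntegral_add_eq _ _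
    _ = _ := by rw [zero_add]; exact integral_fract_add_sub_half_mul (a - b)

lemma intervalIntegrable_psiPer_mul_psiPer (ℓ a b s t : ℝ) :
    IntervalIntegrable (fun x ↦ psiPer ℓ (a - x) * psiPer ℓ (b - x)) volume s t :=
  intervalIntegrable_fract_sub_half_mul ((measurable_const.sub measurable_id).div_const ℓ)
    ((measurable_const.sub measurable_id).div_const ℓ) s t

lemma integral_psiPer_mul_psiPer (ℓ a b : ℝ) :
    ∫ x in (0 : ℝ)..ℓ, psiPer ℓ (a - x) * psiPer ℓ (b - x) = ℓ / 2 * phiPer ℓ (a - b) := by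
  rcases eq_or_ne ℓ 0 with rfl | hℓ
  · simp
  have hscale : ∀ x, psiPer ℓ (a - x) * psiPer ℓ (b - x) =
      (Int.fract (a / ℓ - x / ℓ) - 1 / 2) * (Int.fract (b / ℓ - x / ℓ) - 1 / 2) := fun x ↦ by
    simp only [psiPer, sub_div]
  simp only [hscale]
  rw [integral_comp_div (fun y ↦ (Int.fract (a / ℓ - y) - 1 / 2) * (Int.fract (b / ℓ - y) - 1 / 2))
    hℓ, zero_div, div_self hℓ, integral_fract_sub_sub_half_mul, ← sub_div, smul_eq_mul, phiPer]
  ring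

theorem stmt_1_general (ℓ : ℝ) (N : ℕ) (p : Fin N → ℝ) :
    (∫ x in (0:ℝ)..ℓ, (-(1 / N : ℝ) * ∑ n, psiPer ℓ (p n - x)) ^ 2)
      = (ℓ / (2 * N ^ 2)) * ∑ i, ∑ j, phiPer ℓ (p i - p j) := by
  have hsquare : ∀ x, (-(1 / N : ℝ) * ∑ n, psiPer ℓ (p n - x)) ^ 2 =
      (1 / N : ℝ) ^ 2 * ∑ ij : Fin N × Fin N, psiPer ℓ (p ij.1 - x) * psiPer ℓ (p ij.2 - x) :=
    fun x ↦ by simp only [Fintype.sum_prod_type, ← Finset.sum_mul_sum]; ring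
  simp only [hsquare]
  rw [intervalIntegral.integral_const_mul, integral_finsetSum fun ij _ ↦
      intervalIntegrable_psiPer_mul_psiPer ℓ (p ij.1) (p ij.2) 0 ℓ]
  simp only [integral_psiPer_mul_psiPer, Fintype.sum_prod_type, ← Finset.mul_sum]
  ring

theorem stmt_1 (ℓ : ℝ) (hℓ : 0 < ℓ) (N : ℕ) (hN : 1 ≤ N) (p : Fin N → ℝ) :
    (∫ x in (0:ℝ)..ℓ, (-(1 / N : ℝ) * ∑ n, psiPer ℓ (p n - x)) ^ 2)
      = (ℓ / (2 * N ^ 2)) * ∑ i, ∑ j, phiPer ℓ (p i - p j) :=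
  stmt_1_general ℓ N p
end

section
/- Let ℓ > 0 and let p₁, …, p_N ∈ ℝ (N ≥ 1). Then ∑_{1 ≤ i, j ≤ N} Φ_ℓ(p_i − p_j) ≥ 0; that is, the ℓ-periodic second Bernoulli function Φ_ℓ is positive semidefinite. -/
/-!
The Fourier series of the second Bernoulli polynomial gives
`Φ_ℓ(x) = π⁻² ∑_{n ≥ 1} n⁻² cos (2π n x / ℓ)`, and every cosine kernel is positive semidefinite:
`∑ᵢ ∑ⱼ cᵢ cⱼ cos (yᵢ - yⱼ) = |∑ᵢ cᵢ e^{i yᵢ}|² ≥ 0`.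
-/

open Real Finset

theorem phiPer_eq_bernoulliFun (ℓ x : ℝ) :
    phiPer ℓ x = bernoulliFun 2 (Int.fract (x / ℓ)) := by
  rw [bernoulliFun_two, phiPer, one_div]

theorem cos_two_pi_nat_mul_fract (n : ℕ) (y : ℝ) :
    cos (2 * π * n * Int.fract y) = cos (2 * π * n * y) := by
  have : 2 * π * n * y = 2 * π * n * Int.fract y + (n * ⌊y⌋ : ℤ) * (2 * π) := by
    nth_rw 1 [← Int.fract_add_floor y]
    push_cast
    ring
  rw [this, cos_add_int_mul_two_pi]

/-- The `n = 0` term is `0` because `1 / 0 = 0` in Lean. -/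
theorem hasSum_phiPer (ℓ x : ℝ) :
    HasSum (fun n : ℕ => 1 / (π ^ 2 * n ^ 2) * cos (2 * π * n * (x / ℓ))) (phiPer ℓ x) := by
  have h := (hasSum_one_div_nat_pow_mul_cos one_ne_zero
    ⟨Int.fract_nonneg (x / ℓ), (Int.fract_lt_one (x / ℓ)).le⟩).mul_left (π ^ 2)⁻¹
  have hterm (n : ℕ) :
      (π ^ 2)⁻¹ * (1 / (n : ℝ) ^ (2 * 1) * cos (2 * π * n * Int.fract (x / ℓ)))
        = 1 / (π ^ 2 * n ^ 2) * cos (2 * π * n * (x / ℓ)) := by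
    rw [cos_two_pi_nat_mul_fract]
    field_simp
  have hval : (π ^ 2)⁻¹ * ((-1) ^ (1 + 1) * (2 * π) ^ (2 * 1) / 2 / (2 * 1).factorial *
      bernoulliFun (2 * 1) (Int.fract (x / ℓ))) = phiPer ℓ x := by
    rw [phiPer_eq_bernoulliFun]
    norm_num
    field_simp
  simp only [hterm] at h
  rwa [← bernoulliFun, hval] at h

theorem sum_sum_mul_cos_sub_nonneg {ι : Type*} (s : Finset ι) (c y : ι → ℝ) :
    0 ≤ ∑ i ∈ s, ∑ j ∈ s, c i * c j * cos (y i - y j) := by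
  have h : ∑ i ∈ s, ∑ j ∈ s, c i * c j * cos (y i - y j) =
      (∑ i ∈ s, c i * cos (y i)) ^ 2 + (∑ i ∈ s, c i * sin (y i)) ^ 2 := by
    simp only [sq, sum_mul_sum, ← sum_add_distrib, cos_sub]
    exact sum_congr rfl fun i _ => sum_congr rfl fun j _ => by ring
  rw [h]
  positivity

theorem sum_sum_mul_phiPer_nonneg {ι : Type*} (s : Finset ι) (c : ι → ℝ) (ℓ : ℝ) (p : ι → ℝ) :
    0 ≤ ∑ i ∈ s, ∑ j ∈ s, c i * c j * phiPer ℓ (p i - p j) := by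
  have h := hasSum_sum fun i (_ : i ∈ s) => hasSum_sum fun j (_ : j ∈ s) =>
    (hasSum_phiPer ℓ (p i - p j)).mul_left (c i * c j)
  refine h.nonneg fun n => ?_
  have hterm (i j : ι) :
      c i * c j * (1 / (π ^ 2 * n ^ 2) * cos (2 * π * n * ((p i - p j) / ℓ))) =
        1 / (π ^ 2 * n ^ 2) *
          (c i * c j * cos (2 * π * n * (p i / ℓ) - 2 * π * n * (p j / ℓ))) := by
    rw [sub_div, mul_sub]
    ring
  simp only [hterm, ← mul_sum]
  exact mul_nonneg (by positivity) (sum_sum_mul_cos_sub_nonneg s c _)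

theorem stmt_3_general (ℓ : ℝ) (N : ℕ) (p : Fin N → ℝ) :
    0 ≤ ∑ i, ∑ j, phiPer ℓ (p i - p j) := by
  simpa using sum_sum_mul_phiPer_nonneg univ (fun _ => 1) ℓ p

theorem stmt_3 (ℓ : ℝ) (hℓ : 0 < ℓ) (N : ℕ) (hN : 1 ≤ N) (p : Fin N → ℝ) :
    0 ≤ ∑ i, ∑ j, phiPer ℓ (p i - p j) :=
  stmt_3_general ℓ N p
end

section
/- The map z : B° → {a ∈ K : |a| < 1} is a bijection of the kernel of reduction B° with the open unit disc of K, sending the identity O to 0. -/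
/-!
In the coordinates `z = -x/y`, `w = -1/y` the Weierstrass equation becomes the fixed-point
equation `w = z³ + (a₁z + a₂z²)w + (a₃ + a₄z)w² + a₆w³`. With integral coefficients and
`|z| < 1` the right-hand side is a contraction with constant `|z|` on the closed ball of radius
`|z|³`, and has at most one fixed point in the open unit disc; so each `z` in the open disc
determines exactly one `w`, hence one point `(z/w, -1/w)`, and `|w| ≤ |z|³` forces `|x| > 1`.
Conversely, a point with `|x| > 1` has `|y| > |x|` (compare the dominant terms `y²` and `x³`),
so its coordinates `z`, `w` lie in the open unit disc.
-/

open WeierstrassCurve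

variable {K : Type*} [NontriviallyNormedField K] [IsUltrametricDist K]
  [CompleteSpace K] [IsAlgClosed K]

/-- The "kernel of reduction" `B°`: the identity together with the affine points
with `|x| > 1`. -/
def kernelOfReduction (W : WeierstrassCurve.Affine K) : Set W.Point :=
  {P | P = 0 ∨ ∃ (x y : K) (h : W.Nonsingular x y), P = .some x y h ∧ 1 < ‖x‖}

/-- The local parameter `z = -x/y` at the origin, defined to be `0` at the identity. -/
noncomputable def zmap (W : WeierstrassCurve.Affine K) : W.Point → K
  | .zero => 0
  | @WeierstrassCurve.Affine.Point.some _ _ _ x y _ => -x / y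

open Set Metric

lemma IsUltrametricDist.norm_add_le_of_le {E : Type*} [SeminormedAddGroup E]
    [IsUltrametricDist E] {a b : E} {C : ℝ} (ha : ‖a‖ ≤ C) (hb : ‖b‖ ≤ C) : ‖a + b‖ ≤ C :=
  (norm_add_le_max a b).trans (max_le ha hb)

lemma norm_mul_le_of_norm_le_one_left {R : Type*} [SeminormedRing R] [NormOneClass R]
    {a b : R} {C : ℝ} (ha : ‖a‖ ≤ 1) (hb : ‖b‖ ≤ C) : ‖a * b‖ ≤ C :=
  (norm_mul_le a b).trans <| (mul_le_of_le_one_left (norm_nonneg b) ha).trans hb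

lemma norm_neg_div_lt_one {F : Type*} [NormedField F] {x y : F} (h : ‖x‖ < ‖y‖) :
    ‖-x / y‖ < 1 := by
  rw [norm_div, norm_neg, div_lt_one ((norm_nonneg x).trans_lt h)]
  exact h

namespace WeierstrassCurve

section CommRing

variable {R : Type*} [CommRing R] (W : WeierstrassCurve R)

/-- The right-hand side of the Weierstrass equation in the coordinates `z = -x/y`, `w = -1/y`. -/
def zwMap (z w : R) : R :=
  z ^ 3 + (W.a₁ * z + W.a₂ * z ^ 2) * w + (W.a₃ + W.a₄ * z) * w ^ 2 + W.a₆ * w ^ 3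

def zwSlope (z a b : R) : R :=
  W.a₁ * z + W.a₂ * z ^ 2 + (W.a₃ + W.a₄ * z) * (a + b) + W.a₆ * (a ^ 2 + a * b + b ^ 2)

lemma zwMap_zero (z : R) : W.zwMap z 0 = z ^ 3 := by
  simp [zwMap]

lemma zwMap_sub_zwMap (z a b : R) : W.zwMap z a - W.zwMap z b = (a - b) * W.zwSlope z a b := by
  simp only [zwMap, zwSlope]; ring

end CommRing

section Field

variable {F : Type*} [Field F] (W : WeierstrassCurve F)

lemma equation_div_iff_zwMap_eq {z w : F} (hw : w ≠ 0) :
    W.toAffine.Equation (z / w) (-1 / w) ↔ W.zwMap z w = w := by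
  rw [Affine.equation_iff, zwMap]
  field_simp
  constructor <;> intro h <;> linear_combination -h

lemma zwMap_neg_div_eq {x y : F} (h : W.toAffine.Equation x y) (hy : y ≠ 0) :
    W.zwMap (-x / y) (-1 / y) = -1 / y := by
  have hw : -1 / y ≠ 0 := by simpa using hy
  refine (W.equation_div_iff_zwMap_eq hw).mp ?_
  convert h using 1 <;> field_simp

end Field

structure HasIntegralCoeffs {F : Type*} [Norm F] (W : WeierstrassCurve F) : Prop where
  norm_a₁_le : ‖W.a₁‖ ≤ 1
  norm_a₂_le : ‖W.a₂‖ ≤ 1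
  norm_a₃_le : ‖W.a₃‖ ≤ 1
  norm_a₄_le : ‖W.a₄‖ ≤ 1
  norm_a₆_le : ‖W.a₆‖ ≤ 1

section Ultrametric

variable {F : Type*} [NormedField F] [IsUltrametricDist F] {W : WeierstrassCurve F}

lemma HasIntegralCoeffs.norm_zwSlope_le (hW : W.HasIntegralCoeffs) {z a b : F} {C : ℝ}
    (hC : C ≤ 1) (hz : ‖z‖ ≤ C) (ha : ‖a‖ ≤ C) (hb : ‖b‖ ≤ C) : ‖W.zwSlope z a b‖ ≤ C := by
  have le_one {u : F} (hu : ‖u‖ ≤ C) : ‖u‖ ≤ 1 := hu.trans hC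
  have mul {u v : F} (hu : ‖u‖ ≤ C) (hv : ‖v‖ ≤ C) : ‖u * v‖ ≤ C :=
    norm_mul_le_of_norm_le_one_left (le_one hu) hv
  have add {u v : F} (hu : ‖u‖ ≤ C) (hv : ‖v‖ ≤ C) : ‖u + v‖ ≤ C :=
    IsUltrametricDist.norm_add_le_of_le hu hv
  simp only [zwSlope, sq]
  refine add (add (add ?_ ?_) ?_) ?_
  · exact norm_mul_le_of_norm_le_one_left hW.norm_a₁_le hz
  · exact norm_mul_le_of_norm_le_one_left hW.norm_a₂_le (mul hz hz)
  · refine norm_mul_le_of_norm_le_one_left ?_ (add ha hb)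
    exact IsUltrametricDist.norm_add_le_of_le hW.norm_a₃_le
      (norm_mul_le_of_norm_le_one_left hW.norm_a₄_le (le_one hz))
  · exact norm_mul_le_of_norm_le_one_left hW.norm_a₆_le
      (add (add (mul ha ha) (mul ha hb)) (mul hb hb))

lemma HasIntegralCoeffs.norm_zwMap_sub_le (hW : W.HasIntegralCoeffs) {z a b : F} {C : ℝ}
    (hC : C ≤ 1) (hz : ‖z‖ ≤ C) (ha : ‖a‖ ≤ C) (hb : ‖b‖ ≤ C) :
    ‖W.zwMap z a - W.zwMap z b‖ ≤ C * ‖a - b‖ := by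
  rw [zwMap_sub_zwMap, norm_mul, mul_comm]
  exact mul_le_mul_of_nonneg_right (hW.norm_zwSlope_le hC hz ha hb) (norm_nonneg _)

lemma HasIntegralCoeffs.mapsTo_zwMap_closedBall (hW : W.HasIntegralCoeffs) {z : F}
    (hz : ‖z‖ ≤ 1) :
    MapsTo (W.zwMap z) (closedBall 0 (‖z‖ ^ 3)) (closedBall 0 (‖z‖ ^ 3)) := by
  intro w hw
  rw [mem_closedBall_zero_iff] at hw ⊢
  have hwz : ‖w‖ ≤ ‖z‖ := hw.trans (pow_le_of_le_one (norm_nonneg z) hz three_ne_zero)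
  have hsub := hW.norm_zwMap_sub_le (b := 0) hz le_rfl hwz (by simp)
  rw [zwMap_zero, sub_zero] at hsub
  rw [← add_sub_cancel (z ^ 3) (W.zwMap z w)]
  refine IsUltrametricDist.norm_add_le_of_le (norm_pow z 3).le (hsub.trans ?_)
  exact (mul_le_of_le_one_left (norm_nonneg w) hz).trans hw

lemma HasIntegralCoeffs.exists_zwMap_eq [CompleteSpace F] (hW : W.HasIntegralCoeffs) {z : F}
    (hz : ‖z‖ < 1) : ∃ w, ‖w‖ ≤ ‖z‖ ^ 3 ∧ W.zwMap z w = w := by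
  have hmaps := hW.mapsTo_zwMap_closedBall hz.le
  have hlip : LipschitzOnWith ‖z‖₊ (W.zwMap z) (closedBall 0 (‖z‖ ^ 3)) := by
    refine LipschitzOnWith.of_dist_le_mul fun a ha b hb => ?_
    have hzz : ‖z‖ ^ 3 ≤ ‖z‖ := pow_le_of_le_one (norm_nonneg z) hz.le three_ne_zero
    rw [mem_closedBall_zero_iff] at ha hb
    simpa only [dist_eq_norm, coe_nnnorm] using
      hW.norm_zwMap_sub_le hz.le le_rfl (ha.trans hzz) (hb.trans hzz)
  obtain ⟨w, hw, hfix, -⟩ := ContractingWith.exists_fixedPoint' isClosed_closedBall.isComplete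
    hmaps ⟨hz, hlip.mapsToRestrict hmaps⟩ (x := 0) (by simp) (edist_ne_top _ _)
  exact ⟨w, mem_closedBall_zero_iff.mp hw, hfix⟩

lemma HasIntegralCoeffs.eq_of_zwMap_eq (hW : W.HasIntegralCoeffs) {z a b : F}
    (hz : ‖z‖ < 1) (ha : ‖a‖ < 1) (hb : ‖b‖ < 1)
    (hfa : W.zwMap z a = a) (hfb : W.zwMap z b = b) : a = b := by
  set C := max ‖z‖ (max ‖a‖ ‖b‖)
  have hC : C < 1 := max_lt hz (max_lt ha hb)
  have hle := hW.norm_zwMap_sub_le hC.le (le_max_left _ _)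
    ((le_max_left _ _).trans (le_max_right _ _)) ((le_max_right _ _).trans (le_max_right _ _))
  rw [hfa, hfb] at hle
  have : ‖a - b‖ = 0 := by nlinarith [norm_nonneg (a - b)]
  exact sub_eq_zero.mp (norm_eq_zero.mp this)

lemma HasIntegralCoeffs.norm_x_lt_norm_y (hW : W.HasIntegralCoeffs) {x y : F}
    (h : W.toAffine.Equation x y) (hx : 1 < ‖x‖) : ‖x‖ < ‖y‖ := by
  by_contra! hyx
  have hx2 : ‖x‖ ≤ ‖x‖ ^ 2 := by nlinarith
  have add {u v : F} (hu : ‖u‖ ≤ ‖x‖ ^ 2) (hv : ‖v‖ ≤ ‖x‖ ^ 2) : ‖u + v‖ ≤ ‖x‖ ^ 2 :=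
    IsUltrametricDist.norm_add_le_of_le hu hv
  -- every term of the equation other than `x³` has norm at most `‖x‖²`
  have hx3 : x ^ 3 = y ^ 2 + W.a₁ * x * y + W.a₃ * y + (-W.a₂ * x ^ 2 + -W.a₄ * x + -W.a₆) := by
    rw [(W.toAffine.equation_iff x y).mp h]; ring
  have hle : ‖x ^ 3‖ ≤ ‖x‖ ^ 2 := by
    rw [hx3]
    refine add (add (add ?_ ?_) ?_) (add (add ?_ ?_) ?_) <;>
      simp only [norm_mul, norm_pow, norm_neg]
    · exact pow_le_pow_left₀ (norm_nonneg y) hyx 2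
    · nlinarith [mul_le_mul_of_nonneg_left hyx (norm_nonneg x),
        mul_le_mul_of_nonneg_right hW.norm_a₁_le (mul_nonneg (norm_nonneg x) (norm_nonneg y))]
    · nlinarith [hW.norm_a₃_le, norm_nonneg W.a₃, norm_nonneg y]
    · nlinarith [hW.norm_a₂_le, norm_nonneg W.a₂, norm_nonneg x]
    · nlinarith [hW.norm_a₄_le, norm_nonneg W.a₄, norm_nonneg x]
    · linarith [hW.norm_a₆_le]
  rw [norm_pow] at hle
  nlinarith

lemma HasIntegralCoeffs.eq_of_neg_div_eq (hW : W.HasIntegralCoeffs) {x₁ y₁ x₂ y₂ : F}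
    (h₁ : W.toAffine.Equation x₁ y₁) (h₂ : W.toAffine.Equation x₂ y₂)
    (hx₁ : 1 < ‖x₁‖) (hx₂ : 1 < ‖x₂‖) (hz : -x₁ / y₁ = -x₂ / y₂) : x₁ = x₂ ∧ y₁ = y₂ := by
  have hxy₁ := hW.norm_x_lt_norm_y h₁ hx₁
  have hxy₂ := hW.norm_x_lt_norm_y h₂ hx₂
  have hy₁ : y₁ ≠ 0 := norm_pos_iff.mp (by linarith)
  have hy₂ : y₂ ≠ 0 := norm_pos_iff.mp (by linarith)
  have hfix₁ := W.zwMap_neg_div_eq h₁ hy₁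
  rw [hz] at hfix₁
  have hw : -1 / y₁ = -1 / y₂ :=
    hW.eq_of_zwMap_eq (norm_neg_div_lt_one hxy₂)
      (norm_neg_div_lt_one (by simpa using hx₁.trans hxy₁))
      (norm_neg_div_lt_one (by simpa using hx₂.trans hxy₂)) hfix₁ (W.zwMap_neg_div_eq h₂ hy₂)
  rw [div_eq_div_iff hy₁ hy₂] at hw
  obtain rfl : y₁ = y₂ := by linear_combination hw
  exact ⟨by simpa [hy₁] using hz, rfl⟩

end Ultrametric

end WeierstrassCurve

section KernelOfReduction

variable {F : Type*} [NontriviallyNormedField F] [IsUltrametricDist F]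
  {W : WeierstrassCurve.Affine F}

lemma mapsTo_zmap_kernelOfReduction (hW : W.HasIntegralCoeffs) :
    MapsTo (zmap W) (kernelOfReduction W) {a : F | ‖a‖ < 1} := by
  rintro _ (rfl | ⟨x, y, h, rfl, hx⟩)
  · simp [zmap]
  · exact norm_neg_div_lt_one (hW.norm_x_lt_norm_y h.1 hx)

lemma injOn_zmap_kernelOfReduction (hW : W.HasIntegralCoeffs) :
    InjOn (zmap W) (kernelOfReduction W) := by
  have zmap_ne_zero {x y : F} (h : W.Nonsingular x y) (hx : 1 < ‖x‖) :
      zmap W (.some x y h) ≠ 0 := by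
    have hxy := hW.norm_x_lt_norm_y h.1 hx
    simpa [zmap] using ⟨norm_pos_iff.mp (by linarith), norm_pos_iff.mp (by linarith)⟩
  rintro _ (rfl | ⟨x₁, y₁, h₁, rfl, hx₁⟩) _ (rfl | ⟨x₂, y₂, h₂, rfl, hx₂⟩) hz
  · rfl
  · exact absurd hz.symm (zmap_ne_zero h₂ hx₂)
  · exact absurd hz (zmap_ne_zero h₁ hx₁)
  · obtain ⟨rfl, rfl⟩ := hW.eq_of_neg_div_eq h₁.1 h₂.1 hx₁ hx₂ hz
    rfl

lemma surjOn_zmap_kernelOfReduction [CompleteSpace F] (hW : W.HasIntegralCoeffs) (hΔ : W.Δ ≠ 0) :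
    SurjOn (zmap W) (kernelOfReduction W) {a : F | ‖a‖ < 1} := by
  intro z (hz : ‖z‖ < 1)
  rcases eq_or_ne z 0 with rfl | hz0
  · exact ⟨0, Or.inl rfl, rfl⟩
  obtain ⟨w, hwz, hfix⟩ := hW.exists_zwMap_eq hz
  have hw0 : w ≠ 0 := by
    rintro rfl
    rw [zwMap_zero] at hfix
    exact hz0 ((pow_eq_zero_iff three_ne_zero).mp hfix)
  have hx : 1 < ‖z / w‖ := by
    rw [norm_div, one_lt_div (norm_pos_iff.mpr hw0)]
    exact hwz.trans_lt (pow_lt_self_of_lt_one₀ (norm_pos_iff.mpr hz0) hz (by norm_num))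
  have h : W.Nonsingular (z / w) (-1 / w) := (W.equation_iff_nonsingular_of_Δ_ne_zero hΔ).mp
    ((W.equation_div_iff_zwMap_eq hw0).mpr hfix)
  refine ⟨.some _ _ h, Or.inr ⟨_, _, h, rfl, hx⟩, ?_⟩
  change -(z / w) / (-1 / w) = z
  field_simp

end KernelOfReduction

theorem stmt_5 (W : WeierstrassCurve.Affine K) (hΔ : W.Δ ≠ 0)
    (ha₁ : ‖W.a₁‖ ≤ 1) (ha₂ : ‖W.a₂‖ ≤ 1) (ha₃ : ‖W.a₃‖ ≤ 1)
    (ha₄ : ‖W.a₄‖ ≤ 1) (ha₆ : ‖W.a₆‖ ≤ 1) :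
    Set.BijOn (zmap W) (kernelOfReduction W) {a : K | ‖a‖ < 1} ∧
      zmap W 0 = 0 := by
  have hW : W.HasIntegralCoeffs := ⟨ha₁, ha₂, ha₃, ha₄, ha₆⟩
  exact ⟨⟨mapsTo_zmap_kernelOfReduction hW, injOn_zmap_kernelOfReduction hW,
    surjOn_zmap_kernelOfReduction hW hΔ⟩, rfl⟩
end
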